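/- arXiv:1702.08213 — 2 statements merged into one kernel-verified Lean document; each statement's English description precedes it below -/
import Mathlib

section
/- Assume ρ(ε) < 1. Let Δĝ₁ : ℝ × E₁ × E₂ → E₁ and Δĝ₂ : ℝ × E₁ × E₂ → E₂ be functions with t ↦ Δĝᵢ(t,u,v) measurable for each (u,v), ‖Δĝᵢ(t,u₁,v₁) − Δĝᵢ(t,u₂,v₂)‖ ≤ K(‖u₁−u₂‖+‖v₁−v₂‖) for all t, and Δĝᵢ(t,0,0) = 0 for all t. Let ψ = (u, v) ∈ C_β^+(E₁ × E₂) satisfy, for all t ≥ 0, u(t) = −∫_t^{+∞} exp((t−s)S) Δĝ₁(s, u(s), v(s)) ds and v(t) = exp((t/ε)F)·v(0) + (1/ε)∫₀^t exp(((t−s)/ε)F) Δĝ₂(s, u(s), v(s)) ds. Then ‖ψ‖_{C_β^+} ≤ ‖v(0)‖/(1 − ρ(ε)); in particular ‖(u(t), v(t))‖ ≤ e^{−(γ/ε)t}·‖v(0)‖/(1 − ρ(ε)) for all t ≥ 0. -/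
/-!
Let `β = -γ/ε` and let `N` be the `C_β^+`-norm of `ψ = (u, v)`. Since `Δgᵢ` vanishes at the origin
and is `K`-Lipschitz, `‖Δgᵢ(s, ψ(s))‖ ≤ K N e^{βs}`. Inserting this into the two integral
equations leaves explicit exponential kernels: `e^{γs (t-s)}` on `[t, ∞)`, integrable because
`β < 0 < γs`, and `e^{γf (t-s)/ε}` on `[0, t]`, summable against `e^{βs}` because `γf/ε < β`
(the gap condition). This gives `‖u‖ ≤ εK/(γ + εγs) · N` and `‖v‖ ≤ ‖v(0)‖ - K/(γ + γf) · N`,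
so `N ≤ ‖v(0)‖ + ρ(ε) N`, and `ρ(ε) < 1` closes the estimate.
-/

open MeasureTheory Real Filter

noncomputable section

/-- Weighted sup-norm `sup_{t ≤ 0} e^{-β t} ‖φ t‖` on `(-∞,0]`. -/
def negNorm {E : Type*} [NormedAddCommGroup E] (β : ℝ) (φ : ℝ → E) : ℝ :=
  ⨆ t : Set.Iic (0 : ℝ), Real.exp (-β * t.1) * ‖φ t.1‖

/-- Membership in the Banach space `C_β^-(E)` of continuous functions on `(-∞,0]`
with finite weighted sup-norm. -/
def MemCneg {E : Type*} [NormedAddCommGroup E] (β : ℝ) (φ : ℝ → E) : Prop :=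
  ContinuousOn φ (Set.Iic 0) ∧
    BddAbove (Set.range fun t : Set.Iic (0 : ℝ) => Real.exp (-β * t.1) * ‖φ t.1‖)

/-- Weighted sup-norm `sup_{t ≥ 0} e^{-β t} ‖φ t‖` on `[0,∞)`. -/
def posNorm {E : Type*} [NormedAddCommGroup E] (β : ℝ) (φ : ℝ → E) : ℝ :=
  ⨆ t : Set.Ici (0 : ℝ), Real.exp (-β * t.1) * ‖φ t.1‖

/-- Membership in the Banach space `C_β^+(E)` of continuous functions on `[0,∞)`
with finite weighted sup-norm. -/
def MemCpos {E : Type*} [NormedAddCommGroup E] (β : ℝ) (φ : ℝ → E) : Prop :=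
  ContinuousOn φ (Set.Ici 0) ∧
    BddAbove (Set.range fun t : Set.Ici (0 : ℝ) => Real.exp (-β * t.1) * ‖φ t.1‖)

variable {E₁ E₂ : Type*}
  [NormedAddCommGroup E₁] [NormedSpace ℝ E₁]
  [NormedAddCommGroup E₂] [NormedSpace ℝ E₂]

/-- Slow component of the Lyapunov–Perron operator `I^ε_{x₀}`. -/
def LPslow (S : E₁ →L[ℝ] E₁) (g1 : ℝ → E₁ → E₂ → E₁) (x0 : E₁)
    (x : ℝ → E₁) (y : ℝ → E₂) (t : ℝ) : E₁ :=
  NormedSpace.exp (t • S) x0 +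
    ∫ s in (0:ℝ)..t, NormedSpace.exp ((t - s) • S) (g1 s (x s) (y s))

/-- Fast component of the Lyapunov–Perron operator `I^ε_{x₀}`. -/
def LPfast (F : E₂ →L[ℝ] E₂) (g2 : ℝ → E₁ → E₂ → E₂) (ε : ℝ)
    (x : ℝ → E₁) (y : ℝ → E₂) (t : ℝ) : E₂ :=
  (1/ε) • ∫ s in Set.Iic t, NormedSpace.exp (((t - s)/ε) • F) (g2 s (x s) (y s))

section WeightedNorm

variable {E : Type*} [NormedAddCommGroup E] {β : ℝ} {φ : ℝ → E}

lemma posNorm_nonneg (β : ℝ) (φ : ℝ → E) : 0 ≤ posNorm β φ :=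
  Real.iSup_nonneg fun _ => by positivity

lemma norm_le_posNorm_mul_exp (hφ : MemCpos β φ) {t : ℝ} (ht : 0 ≤ t) :
    ‖φ t‖ ≤ posNorm β φ * exp (β * t) := by
  have h := le_ciSup hφ.2 ⟨t, ht⟩
  rwa [neg_mul, exp_neg, inv_mul_le_iff₀ (exp_pos _), mul_comm] at h

lemma posNorm_le_of_norm_le {C : ℝ} (h : ∀ t ≥ (0 : ℝ), ‖φ t‖ ≤ C * exp (β * t)) :
    posNorm β φ ≤ C := by
  have : Nonempty (Set.Ici (0 : ℝ)) := ⟨⟨0, Set.self_mem_Ici⟩⟩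
  refine ciSup_le fun t => ?_
  rw [neg_mul, exp_neg, inv_mul_le_iff₀ (exp_pos _), mul_comm]
  exact h t t.2

end WeightedNorm

lemma norm_le_of_lipschitz_of_map_zero {E E' G : Type*} [NormedAddCommGroup E]
    [NormedAddCommGroup E'] [NormedAddCommGroup G] {g : E → E' → G} {K : ℝ}
    (hg : ∀ u₁ v₁ u₂ v₂, ‖g u₁ v₁ - g u₂ v₂‖ ≤ K * (‖u₁ - u₂‖ + ‖v₁ - v₂‖)) (h0 : g 0 0 = 0)
    (u : E) (v : E') : ‖g u v‖ ≤ K * (‖u‖ + ‖v‖) := by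
  simpa [h0] using hg u v 0 0

lemma exp_mul_sub_mul_exp (a β t s : ℝ) :
    exp (a * (t - s)) * exp (β * s) = exp (a * t) * exp ((β - a) * s) := by
  rw [← exp_add, ← exp_add]
  ring_nf

lemma integrableOn_exp_mul_sub_mul_exp {a β : ℝ} (h : β < a) (t : ℝ) :
    IntegrableOn (fun s => exp (a * (t - s)) * exp (β * s)) (Set.Ici t) := by
  simp_rw [exp_mul_sub_mul_exp]
  rw [integrableOn_Ici_iff_integrableOn_Ioi]
  exact (integrableOn_exp_mul_Ioi (sub_neg.2 h) t).const_mul _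

lemma integral_Ici_exp_mul_sub_mul_exp {a β : ℝ} (h : β < a) (t : ℝ) :
    ∫ s in Set.Ici t, exp (a * (t - s)) * exp (β * s) = exp (β * t) / (a - β) := by
  simp_rw [exp_mul_sub_mul_exp]
  rw [integral_Ici_eq_integral_Ioi, integral_const_mul, integral_exp_mul_Ioi (sub_neg.2 h),
    neg_div, ← div_neg, neg_sub, mul_div_assoc', ← exp_add]
  ring_nf

lemma intervalIntegral_exp_mul_sub_mul_exp_le {l β : ℝ} (h : l < β) (t : ℝ) :
    ∫ s in (0 : ℝ)..t, exp (l * (t - s)) * exp (β * s) ≤ exp (β * t) / (β - l) := by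
  have hpos : 0 < β - l := sub_pos.2 h
  simp_rw [exp_mul_sub_mul_exp]
  rw [intervalIntegral.integral_const_mul,
    intervalIntegral.integral_comp_mul_left (fun s => exp s) hpos.ne', integral_exp, mul_zero,
    exp_zero, smul_eq_mul, inv_mul_eq_div, mul_div_assoc', mul_sub, mul_one, ← exp_add]
  gcongr
  rw [← add_mul, add_sub_cancel]
  linarith [exp_pos (l * t)]

section IntegralEstimates

variable {E : Type*} [NormedAddCommGroup E] [NormedSpace ℝ E]

lemma norm_setIntegral_Ici_le_of_norm_le_exp {h : ℝ → E} {a β C t : ℝ} (hβ : β < a)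
    (hh : ∀ s ≥ t, ‖h s‖ ≤ C * (exp (a * (t - s)) * exp (β * s))) :
    ‖∫ s in Set.Ici t, h s‖ ≤ C * exp (β * t) / (a - β) := by
  refine (norm_integral_le_of_norm_le ((integrableOn_exp_mul_sub_mul_exp hβ t).const_mul C)
    ((ae_restrict_mem measurableSet_Ici).mono fun s hs => hh s hs)).trans_eq ?_
  rw [integral_const_mul, integral_Ici_exp_mul_sub_mul_exp hβ, mul_div_assoc]

lemma norm_intervalIntegral_le_of_norm_le_exp {h : ℝ → E} {l β C t : ℝ} (hl : l < β)
    (hC : 0 ≤ C) (ht : 0 ≤ t)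
    (hh : ∀ s ∈ Set.Icc 0 t, ‖h s‖ ≤ C * (exp (l * (t - s)) * exp (β * s))) :
    ‖∫ s in (0 : ℝ)..t, h s‖ ≤ C * exp (β * t) / (β - l) := by
  have hcont : Continuous fun s => C * (exp (l * (t - s)) * exp (β * s)) := by fun_prop
  refine (intervalIntegral.norm_integral_le_of_norm_le ht
    (Eventually.of_forall fun s hs => hh s (Set.Ioc_subset_Icc_self hs))
    (hcont.intervalIntegrable 0 t)).trans ?_
  rw [intervalIntegral.integral_const_mul, mul_div_assoc]
  exact mul_le_mul_of_nonneg_left (intervalIntegral_exp_mul_sub_mul_exp_le hl t) hC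

lemma norm_setIntegral_Ici_exp_smul_le {S : E →L[ℝ] E} {γs β C t : ℝ}
    (hS : ∀ τ ≤ (0 : ℝ), ∀ x : E, ‖NormedSpace.exp (τ • S) x‖ ≤ exp (γs * τ) * ‖x‖)
    (hβ : β < γs) {f : ℝ → E} (hf : ∀ s ≥ t, ‖f s‖ ≤ C * exp (β * s)) :
    ‖∫ s in Set.Ici t, NormedSpace.exp ((t - s) • S) (f s)‖ ≤ C * exp (β * t) / (γs - β) :=
  norm_setIntegral_Ici_le_of_norm_le_exp hβ fun s hs => calc
    _ ≤ exp (γs * (t - s)) * ‖f s‖ := hS _ (sub_nonpos.2 hs) _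
    _ ≤ exp (γs * (t - s)) * (C * exp (β * s)) := by gcongr; exact hf s hs
    _ = C * (exp (γs * (t - s)) * exp (β * s)) := by ring

lemma norm_smul_intervalIntegral_exp_smul_le {F : E →L[ℝ] E} {γf β C ε t : ℝ}
    (hF : ∀ τ ≥ (0 : ℝ), ∀ y : E, ‖NormedSpace.exp (τ • F) y‖ ≤ exp (γf * τ) * ‖y‖)
    (hε : 0 < ε) (hβ : γf < ε * β) (hC : 0 ≤ C) (ht : 0 ≤ t) {f : ℝ → E}
    (hf : ∀ s ∈ Set.Icc 0 t, ‖f s‖ ≤ C * exp (β * s)) :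
    ‖(1 / ε) • ∫ s in (0 : ℝ)..t, NormedSpace.exp (((t - s) / ε) • F) (f s)‖ ≤
      C * exp (β * t) / (ε * β - γf) := by
  have hl : γf / ε < β := (div_lt_iff₀' hε).2 hβ
  have hI := norm_intervalIntegral_le_of_norm_le_exp hl hC ht fun s hs => calc
    _ ≤ exp (γf * ((t - s) / ε)) * ‖f s‖ := hF _ (div_nonneg (sub_nonneg.2 hs.2) hε.le) _
    _ ≤ exp (γf * ((t - s) / ε)) * (C * exp (β * s)) := by gcongr; exact hf s hs
    _ = C * (exp (γf / ε * (t - s)) * exp (β * s)) := by ring_nf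
  rw [norm_smul, Real.norm_of_nonneg (by positivity)]
  calc 1 / ε * _ ≤ 1 / ε * (C * exp (β * t) / (β - γf / ε)) := by gcongr
    _ = C * exp (β * t) / (ε * β - γf) := by field_simp

lemma posNorm_le_of_eq_neg_integral_Ici_exp_smul {S : E →L[ℝ] E} {γs β C : ℝ}
    (hS : ∀ τ ≤ (0 : ℝ), ∀ x : E, ‖NormedSpace.exp (τ • S) x‖ ≤ exp (γs * τ) * ‖x‖)
    (hβ : β < γs) {f u : ℝ → E} (hf : ∀ s ≥ (0 : ℝ), ‖f s‖ ≤ C * exp (β * s))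
    (hu : ∀ t ≥ (0 : ℝ), u t = -∫ s in Set.Ici t, NormedSpace.exp ((t - s) • S) (f s)) :
    posNorm β u ≤ C / (γs - β) :=
  posNorm_le_of_norm_le fun t ht => by
    rw [hu t ht, norm_neg]
    exact (norm_setIntegral_Ici_exp_smul_le hS hβ fun s hs => hf s (ht.trans hs)).trans_eq
      (by ring)

lemma posNorm_le_of_eq_exp_smul_add_integral_exp_smul {F : E →L[ℝ] E} {γf β C ε : ℝ}
    (hF : ∀ τ ≥ (0 : ℝ), ∀ y : E, ‖NormedSpace.exp (τ • F) y‖ ≤ exp (γf * τ) * ‖y‖)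
    (hε : 0 < ε) (hβ : γf < ε * β) (hC : 0 ≤ C) {f v : ℝ → E}
    (hf : ∀ s ≥ (0 : ℝ), ‖f s‖ ≤ C * exp (β * s))
    (hv : ∀ t ≥ (0 : ℝ), v t = NormedSpace.exp ((t / ε) • F) (v 0) +
      (1 / ε) • ∫ s in (0 : ℝ)..t, NormedSpace.exp (((t - s) / ε) • F) (f s)) :
    posNorm β v ≤ ‖v 0‖ + C / (ε * β - γf) :=
  posNorm_le_of_norm_le fun t ht => by
    have hdecay : exp (γf * (t / ε)) ≤ exp (β * t) := by
      rw [exp_le_exp, mul_div_left_comm, mul_comm β]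
      exact mul_le_mul_of_nonneg_left ((div_le_iff₀' hε).2 hβ.le) ht
    rw [hv t ht, add_mul, div_mul_eq_mul_div, mul_comm]
    exact (norm_add_le _ _).trans <| add_le_add
      ((hF (t / ε) (by positivity) (v 0)).trans (by gcongr))
      (norm_smul_intervalIntegral_exp_smul_le hF hε hβ hC ht fun s hs => hf s hs.1)

end IntegralEstimates

theorem tracking_fixed_point_bound_general
    {E₁ E₂ : Type*}
    [NormedAddCommGroup E₁] [NormedSpace ℝ E₁]
    [NormedAddCommGroup E₂] [NormedSpace ℝ E₂]
    (S : E₁ →L[ℝ] E₁) (F : E₂ →L[ℝ] E₂)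
    (γs γf γ K ε : ℝ)
    (hγs : 0 < γs) (hγ : 0 < γ) (hK : 0 < K)
    (hgap : K < -(γ + γf)) (hε : 0 < ε)
    (hS : ∀ t ≤ (0:ℝ), ∀ x : E₁, ‖NormedSpace.exp (t • S) x‖ ≤ Real.exp (γs * t) * ‖x‖)
    (hF : ∀ t ≥ (0:ℝ), ∀ y : E₂, ‖NormedSpace.exp (t • F) y‖ ≤ Real.exp (γf * t) * ‖y‖)
    (hρ : (ε * K / (γ + ε * γs) - K / (γ + γf)) < 1)
    (Δg1 : ℝ → E₁ → E₂ → E₁) (Δg2 : ℝ → E₁ → E₂ → E₂)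
    (hl1 : ∀ t u₁ v₁ u₂ v₂, ‖Δg1 t u₁ v₁ - Δg1 t u₂ v₂‖ ≤ K * (‖u₁ - u₂‖ + ‖v₁ - v₂‖))
    (hl2 : ∀ t u₁ v₁ u₂ v₂, ‖Δg2 t u₁ v₁ - Δg2 t u₂ v₂‖ ≤ K * (‖u₁ - u₂‖ + ‖v₁ - v₂‖))
    (h01 : ∀ t, Δg1 t 0 0 = 0) (h02 : ∀ t, Δg2 t 0 0 = 0)
    (u : ℝ → E₁) (v : ℝ → E₂)
    (hmem : MemCpos (-γ/ε) u ∧ MemCpos (-γ/ε) v)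
    (hfp : ∀ t ≥ (0:ℝ),
      u t = -∫ s in Set.Ici t, NormedSpace.exp ((t - s) • S) (Δg1 s (u s) (v s)) ∧
      v t = NormedSpace.exp ((t/ε) • F) (v 0) +
        (1/ε) • ∫ s in (0:ℝ)..t, NormedSpace.exp (((t - s)/ε) • F) (Δg2 s (u s) (v s))) :
    posNorm (-γ/ε) u + posNorm (-γ/ε) v ≤ ‖v 0‖ / (1 - (ε * K / (γ + ε * γs) - K / (γ + γf))) ∧
    ∀ t ≥ (0:ℝ), ‖u t‖ + ‖v t‖ ≤
      Real.exp (-(γ/ε) * t) * (‖v 0‖ / (1 - (ε * K / (γ + ε * γs) - K / (γ + γf)))) := by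
  rw [← neg_div]
  set β := -γ / ε with hβ
  set N := posNorm β u + posNorm β v with hN
  set ρ := ε * K / (γ + ε * γs) - K / (γ + γf)
  have hβneg : β < 0 := div_neg_of_neg_of_pos (neg_neg_of_pos hγ) hε
  have hN0 : 0 ≤ N := add_nonneg (posNorm_nonneg β u) (posNorm_nonneg β v)
  have hψ (s : ℝ) (hs : 0 ≤ s) : ‖u s‖ + ‖v s‖ ≤ N * exp (β * s) := by
    rw [add_mul]
    exact add_le_add (norm_le_posNorm_mul_exp hmem.1 hs) (norm_le_posNorm_mul_exp hmem.2 hs)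
  have hg1 (s : ℝ) (hs : 0 ≤ s) : ‖Δg1 s (u s) (v s)‖ ≤ K * N * exp (β * s) :=
    (norm_le_of_lipschitz_of_map_zero (hl1 s) (h01 s) _ _).trans
      (by rw [mul_assoc]; gcongr; exact hψ s hs)
  have hg2 (s : ℝ) (hs : 0 ≤ s) : ‖Δg2 s (u s) (v s)‖ ≤ K * N * exp (β * s) :=
    (norm_le_of_lipschitz_of_map_zero (hl2 s) (h02 s) _ _).trans
      (by rw [mul_assoc]; gcongr; exact hψ s hs)
  have hεβ : ε * β = -γ := by rw [hβ]; field_simp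
  have hslow := posNorm_le_of_eq_neg_integral_Ici_exp_smul hS (hβneg.trans hγs) hg1
    fun t ht => (hfp t ht).1
  have hfast := posNorm_le_of_eq_exp_smul_add_integral_exp_smul hF hε (by linarith)
    (mul_nonneg hK.le hN0) hg2 fun t ht => (hfp t ht).2
  have hρN : K * N / (γs - β) + K * N / (ε * β - γf) = ρ * N := by
    rw [hεβ, hβ, ← neg_add', div_neg]
    field_simp
    ring
  have hbound : N ≤ ‖v 0‖ / (1 - ρ) := by
    rw [le_div_iff₀ (sub_pos.2 hρ)]
    linarith
  refine ⟨hbound, fun t ht => (hψ t ht).trans ?_⟩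
  rw [mul_comm]
  gcongr

/-- A priori bound for a `C_β^+` fixed point of the tracking operator:
`‖ψ‖_{C_β^+} ≤ ‖v(0)‖/(1-ρ(ε))`, hence pointwise exponential decay. -/
theorem tracking_fixed_point_bound
    {E₁ E₂ : Type*}
    [NormedAddCommGroup E₁] [NormedSpace ℝ E₁] [FiniteDimensional ℝ E₁] [MeasurableSpace E₁] [BorelSpace E₁]
    [NormedAddCommGroup E₂] [NormedSpace ℝ E₂] [FiniteDimensional ℝ E₂] [MeasurableSpace E₂] [BorelSpace E₂]
    (S : E₁ →L[ℝ] E₁) (F : E₂ →L[ℝ] E₂)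
    (γs γf γ K ε : ℝ)
    (hγs : 0 < γs) (hγf : γf < 0) (hγ : 0 < γ) (hK : 0 < K)
    (hgap : K < -(γ + γf)) (hε : 0 < ε)
    (hS : ∀ t ≤ (0:ℝ), ∀ x : E₁, ‖NormedSpace.exp (t • S) x‖ ≤ Real.exp (γs * t) * ‖x‖)
    (hF : ∀ t ≥ (0:ℝ), ∀ y : E₂, ‖NormedSpace.exp (t • F) y‖ ≤ Real.exp (γf * t) * ‖y‖)
    (hρ : (ε * K / (γ + ε * γs) - K / (γ + γf)) < 1)
    (Δg1 : ℝ → E₁ → E₂ → E₁) (Δg2 : ℝ → E₁ → E₂ → E₂)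
    (hm1 : ∀ u v, Measurable fun t => Δg1 t u v)
    (hm2 : ∀ u v, Measurable fun t => Δg2 t u v)
    (hl1 : ∀ t u₁ v₁ u₂ v₂, ‖Δg1 t u₁ v₁ - Δg1 t u₂ v₂‖ ≤ K * (‖u₁ - u₂‖ + ‖v₁ - v₂‖))
    (hl2 : ∀ t u₁ v₁ u₂ v₂, ‖Δg2 t u₁ v₁ - Δg2 t u₂ v₂‖ ≤ K * (‖u₁ - u₂‖ + ‖v₁ - v₂‖))
    (h01 : ∀ t, Δg1 t 0 0 = 0) (h02 : ∀ t, Δg2 t 0 0 = 0)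
    (u : ℝ → E₁) (v : ℝ → E₂)
    (hmem : MemCpos (-γ/ε) u ∧ MemCpos (-γ/ε) v)
    (hfp : ∀ t ≥ (0:ℝ),
      u t = -∫ s in Set.Ici t, NormedSpace.exp ((t - s) • S) (Δg1 s (u s) (v s)) ∧
      v t = NormedSpace.exp ((t/ε) • F) (v 0) +
        (1/ε) • ∫ s in (0:ℝ)..t, NormedSpace.exp (((t - s)/ε) • F) (Δg2 s (u s) (v s))) :
    posNorm (-γ/ε) u + posNorm (-γ/ε) v ≤ ‖v 0‖ / (1 - (ε * K / (γ + ε * γs) - K / (γ + γf))) ∧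
    ∀ t ≥ (0:ℝ), ‖u t‖ + ‖v t‖ ≤
      Real.exp (-(γ/ε) * t) * (‖v 0‖ / (1 - (ε * K / (γ + ε * γs) - K / (γ + γf)))) :=
  tracking_fixed_point_bound_general S F γs γf γ K ε hγs hγ hK hgap hε hS hF hρ Δg1 Δg2 hl1 hl2 h01
    h02 u v hmem hfp
end
end

section
/- (Pathwise convergence of the slow manifold to the critical manifold.) Assume moreover that ‖g₁(x,y)‖ ≤ C for all (x,y), for some constant C > 0. For each sufficiently small ε > 0 (so that ρ(ε) < 1), let h̃^ε(x₀) := ỹ^ε(0), where (x̃^ε, ỹ^ε) is the unique C_{−γ}^−(E₁ × E₂) solution of the time-rescaled slow–fast integral system with initial slow value x₀, and let h⁰(x₀) := y⁰(0), where y⁰ is the unique C_{−γ}^−(E₂) solution of the critical integral equation y⁰(t) = ∫_{−∞}^t exp((t−s)F) g₂(x₀, y⁰(s) + σξ(s)) ds. Then for every x₀ ∈ E₁, lim_{ε→0⁺} h̃^ε(x₀) = h⁰(x₀). -/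
/-!
Along the rescaled solution the slow variable barely moves: `exp (t • S)` does not expand for
`t ≤ 0` and `‖g₁‖ ≤ C`, so `‖x̃ s - x₀‖ ≤ ε (‖S‖ ‖x₀‖ + C) |s|`, which is `O(ε e^{-γ s})`.
The fast components `ỹ` and `y⁰` solve the same Lyapunov–Perron equation, driven by `x̃` and by
the constant `x₀`. Hence their weighted distance `D = sup_{t ≤ 0} e^{γ t} ‖ỹ t - y⁰ t‖` satisfies
`D ≤ K (O(ε) + D) / (-(γ + γf))`, and the gap `K < -(γ + γf)` gives `D = O(ε)`;
finally `‖h̃^ε(x₀) - h⁰(x₀)‖ ≤ D`.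
-/

open MeasureTheory Real Filter

noncomputable section

variable {E₁ E₂ : Type*}
  [NormedAddCommGroup E₁] [NormedSpace ℝ E₁]
  [NormedAddCommGroup E₂] [NormedSpace ℝ E₂]

/-- Slow component of the time-rescaled slow–fast integral system. -/
def RSslow (S : E₁ →L[ℝ] E₁) (g1 : E₁ → E₂ → E₁) (σ ε : ℝ) (ξ : ℝ → E₂) (x0 : E₁)
    (x : ℝ → E₁) (y : ℝ → E₂) (t : ℝ) : E₁ :=
  NormedSpace.exp ((ε * t) • S) x0 +
    ε • ∫ s in (0:ℝ)..t, NormedSpace.exp ((ε * (t - s)) • S) (g1 (x s) (y s + σ • ξ s))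

/-- Fast component of the time-rescaled slow–fast integral system. -/
def RSfast (F : E₂ →L[ℝ] E₂) (g2 : E₁ → E₂ → E₂) (σ : ℝ) (ξ : ℝ → E₂)
    (x : ℝ → E₁) (y : ℝ → E₂) (t : ℝ) : E₂ :=
  ∫ s in Set.Iic t, NormedSpace.exp ((t - s) • F) (g2 (x s) (y s + σ • ξ s))

/-- Right-hand side of the critical (`ε = 0`) integral equation. -/
def Crit (F : E₂ →L[ℝ] E₂) (g2 : E₁ → E₂ → E₂) (σ : ℝ) (ξ : ℝ → E₂) (x0 : E₁)
    (y : ℝ → E₂) (t : ℝ) : E₂ :=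
  ∫ s in Set.Iic t, NormedSpace.exp ((t - s) • F) (g2 x0 (y s + σ • ξ s))

open Set Topology

lemma le_mul_exp_neg_of_exp_mul_le {a x M : ℝ} (h : exp a * x ≤ M) : x ≤ M * exp (-a) := by
  rwa [exp_neg, ← div_eq_mul_inv, le_div_iff₀' (exp_pos a)]

lemma neg_le_exp_neg_mul_div {γ : ℝ} (hγ : 0 < γ) (s : ℝ) : -s ≤ exp (-γ * s) / γ := by
  rw [le_div_iff₀ hγ]
  linarith [add_one_le_exp (-γ * s)]

section WeightedNorm

variable {E : Type*} [NormedAddCommGroup E] {β : ℝ} {φ ψ : ℝ → E}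

lemma MemCneg.sub (hφ : MemCneg β φ) (hψ : MemCneg β ψ) : MemCneg β (φ - ψ) := by
  obtain ⟨Mφ, hMφ⟩ := hφ.2
  obtain ⟨Mψ, hMψ⟩ := hψ.2
  refine ⟨hφ.1.sub hψ.1, Mφ + Mψ, ?_⟩
  rintro _ ⟨t, rfl⟩
  calc exp (-β * t.1) * ‖(φ - ψ) t.1‖ ≤ exp (-β * t.1) * ‖φ t.1‖ + exp (-β * t.1) * ‖ψ t.1‖ := by
        rw [← mul_add]
        exact mul_le_mul_of_nonneg_left (norm_sub_le _ _) (exp_pos _).le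
    _ ≤ Mφ + Mψ := add_le_add (hMφ ⟨t, rfl⟩) (hMψ ⟨t, rfl⟩)

lemma MemCneg.exp_mul_norm_le_negNorm (hφ : MemCneg β φ) {s : ℝ} (hs : s ≤ 0) :
    exp (-β * s) * ‖φ s‖ ≤ negNorm β φ :=
  le_ciSup (f := fun t : Iic (0 : ℝ) => exp (-β * t.1) * ‖φ t.1‖) hφ.2 ⟨s, hs⟩

lemma MemCneg.norm_le_negNorm_mul (hφ : MemCneg β φ) {s : ℝ} (hs : s ≤ 0) :
    ‖φ s‖ ≤ negNorm β φ * exp (β * s) := by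
  simpa using le_mul_exp_neg_of_exp_mul_le (hφ.exp_mul_norm_le_negNorm hs)

lemma MemCneg.norm_le_negNorm (hφ : MemCneg β φ) : ‖φ 0‖ ≤ negNorm β φ := by
  simpa using hφ.exp_mul_norm_le_negNorm le_rfl

lemma negNorm_le {c : ℝ} (h : ∀ t ≤ (0 : ℝ), exp (-β * t) * ‖φ t‖ ≤ c) : negNorm β φ ≤ c :=
  have : Nonempty (Iic (0 : ℝ)) := nonempty_Iic.to_subtype
  ciSup_le fun t => h t.1 t.2

end WeightedNorm

section Convolution

variable {E : Type*} [NormedAddCommGroup E] [NormedSpace ℝ E]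
  {F : E →L[ℝ] E} {γf β c t : ℝ} {v : ℝ → E}

lemma norm_exp_smul_apply_le_of_le
    (hF : ∀ t ≥ (0:ℝ), ∀ y : E, ‖NormedSpace.exp (t • F) y‖ ≤ exp (γf * t) * ‖y‖)
    (hvb : ∀ s ≤ t, ‖v s‖ ≤ c * exp (β * s)) {s : ℝ} (hs : s ≤ t) :
    ‖NormedSpace.exp ((t - s) • F) (v s)‖ ≤ c * exp (γf * t) * exp ((β - γf) * s) :=
  calc ‖NormedSpace.exp ((t - s) • F) (v s)‖ ≤ exp (γf * (t - s)) * (c * exp (β * s)) :=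
        (hF _ (sub_nonneg.2 hs) _).trans <|
          mul_le_mul_of_nonneg_left (hvb s hs) (exp_pos _).le
    _ = c * exp (γf * t) * exp ((β - γf) * s) := by
        rw [mul_left_comm, mul_assoc, ← exp_add, ← exp_add]; ring_nf

lemma integrableOn_Iic_exp_smul_apply [CompleteSpace E]
    (hF : ∀ t ≥ (0:ℝ), ∀ y : E, ‖NormedSpace.exp (t • F) y‖ ≤ exp (γf * t) * ‖y‖)
    (hβ : γf < β) (hv : AEStronglyMeasurable v (volume.restrict (Iic t)))
    (hvb : ∀ s ≤ t, ‖v s‖ ≤ c * exp (β * s)) :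
    IntegrableOn (fun s => NormedSpace.exp ((t - s) • F) (v s)) (Iic t) := by
  have hexp : Continuous fun u : ℝ => NormedSpace.exp (u • F) :=
    continuous_iff_continuousAt.2 fun u => (hasDerivAt_exp_smul_const F u).continuousAt
  have hmeas : AEStronglyMeasurable (fun s => NormedSpace.exp ((t - s) • F) (v s))
      (volume.restrict (Iic t)) :=
    isBoundedBilinearMap_apply.continuous.comp_aestronglyMeasurable
      ((hexp.comp (continuous_const.sub continuous_id)).aestronglyMeasurable.prodMk hv)
  refine Integrable.mono' (((integrableOn_exp_mul_Iic (sub_pos.2 hβ) t).const_mul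
    (c * exp (γf * t)))) hmeas ?_
  exact (ae_restrict_iff' measurableSet_Iic).2 <| ae_of_all _ fun s hs =>
    norm_exp_smul_apply_le_of_le hF hvb hs

lemma norm_integral_Iic_exp_smul_apply_le
    (hF : ∀ t ≥ (0:ℝ), ∀ y : E, ‖NormedSpace.exp (t • F) y‖ ≤ exp (γf * t) * ‖y‖)
    (hβ : γf < β) (hvb : ∀ s ≤ t, ‖v s‖ ≤ c * exp (β * s)) :
    ‖∫ s in Iic t, NormedSpace.exp ((t - s) • F) (v s)‖ ≤ c * exp (β * t) / (β - γf) :=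
  calc ‖∫ s in Iic t, NormedSpace.exp ((t - s) • F) (v s)‖
      ≤ ∫ s in Iic t, c * exp (γf * t) * exp ((β - γf) * s) :=
        norm_integral_le_of_norm_le ((integrableOn_exp_mul_Iic (sub_pos.2 hβ) t).const_mul _)
          ((ae_restrict_iff' measurableSet_Iic).2 <| ae_of_all _ fun s hs =>
            norm_exp_smul_apply_le_of_le hF hvb hs)
    _ = c * exp (β * t) / (β - γf) := by
        rw [integral_const_mul, integral_exp_mul_Iic (sub_pos.2 hβ), mul_assoc, ← mul_div_assoc,
          ← exp_add]
        ring_nf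

end Convolution

section Nonlinearity

variable {X Y Z : Type*} [SeminormedAddCommGroup X] [SeminormedAddCommGroup Y]
  [SeminormedAddCommGroup Z] {g : X → Y → Z} {K : ℝ}

lemma continuous_uncurry_of_norm_sub_le (hK : 0 ≤ K)
    (hg : ∀ x₁ y₁ x₂ y₂, ‖g x₁ y₁ - g x₂ y₂‖ ≤ K * (‖x₁ - x₂‖ + ‖y₁ - y₂‖)) :
    Continuous (Function.uncurry g) := by
  refine (LipschitzWith.of_dist_le' (K := 2 * K) fun p q => ?_).continuous
  rw [dist_eq_norm, dist_eq_norm]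
  calc ‖g p.1 p.2 - g q.1 q.2‖ ≤ K * (‖p.1 - q.1‖ + ‖p.2 - q.2‖) := hg _ _ _ _
    _ ≤ K * (‖p - q‖ + ‖p - q‖) := by gcongr; exacts [norm_fst_le (p - q), norm_snd_le (p - q)]
    _ = 2 * K * ‖p - q‖ := by ring

lemma norm_le_of_norm_sub_le (hg0 : g 0 0 = 0)
    (hg : ∀ x₁ y₁ x₂ y₂, ‖g x₁ y₁ - g x₂ y₂‖ ≤ K * (‖x₁ - x₂‖ + ‖y₁ - y₂‖)) (x : X) (y : Y) :
    ‖g x y‖ ≤ K * (‖x‖ + ‖y‖) := by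
  simpa [hg0] using hg x y 0 0

end Nonlinearity

section SlowFlow

variable {E : Type*} [NormedAddCommGroup E] [NormedSpace ℝ E]
  {S : E →L[ℝ] E} {γs : ℝ}

lemma norm_exp_smul_apply_le_self (hγs : 0 ≤ γs)
    (hS : ∀ t ≤ (0:ℝ), ∀ x : E, ‖NormedSpace.exp (t • S) x‖ ≤ exp (γs * t) * ‖x‖)
    {r : ℝ} (hr : r ≤ 0) (x : E) : ‖NormedSpace.exp (r • S) x‖ ≤ ‖x‖ :=
  (hS r hr x).trans <| mul_le_of_le_one_left (norm_nonneg x) <|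
    exp_le_one_iff.2 (mul_nonpos_of_nonneg_of_nonpos hγs hr)

lemma norm_exp_smul_apply_sub_self_le [CompleteSpace E] (hγs : 0 ≤ γs)
    (hS : ∀ t ≤ (0:ℝ), ∀ x : E, ‖NormedSpace.exp (t • S) x‖ ≤ exp (γs * t) * ‖x‖)
    {r : ℝ} (hr : r ≤ 0) (x : E) : ‖NormedSpace.exp (r • S) x - x‖ ≤ ‖S‖ * ‖x‖ * (-r) := by
  have hderiv : ∀ u ∈ Icc r 0, HasDerivWithinAt (fun u : ℝ => NormedSpace.exp (u • S) x)
      (NormedSpace.exp (u • S) (S x)) (Icc r 0) u := fun u _ =>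
    ((hasDerivAt_exp_smul_const S u).clm_apply (hasDerivAt_const u x)).hasDerivWithinAt.congr_deriv
      (by simp)
  have hbound : ∀ u ∈ Icc r 0, ‖NormedSpace.exp (u • S) (S x)‖ ≤ ‖S‖ * ‖x‖ := fun u hu =>
    (norm_exp_smul_apply_le_self hγs hS hu.2 _).trans (S.le_opNorm x)
  simpa [abs_of_nonpos hr] using
    (convex_Icc r 0).norm_image_sub_le_of_norm_hasDerivWithin_le hderiv hbound
      (right_mem_Icc.2 hr) (left_mem_Icc.2 hr)

lemma norm_RSslow_sub_le [CompleteSpace E] (hγs : 0 ≤ γs)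
    (hS : ∀ t ≤ (0:ℝ), ∀ x : E, ‖NormedSpace.exp (t • S) x‖ ≤ exp (γs * t) * ‖x‖)
    {g1 : E → E₂ → E} {C : ℝ} (hg1 : ∀ x y, ‖g1 x y‖ ≤ C) {ε : ℝ} (hε : 0 ≤ ε)
    (σ : ℝ) (ξ : ℝ → E₂) (x0 : E) (x : ℝ → E) (y : ℝ → E₂) {s : ℝ} (hs : s ≤ 0) :
    ‖RSslow S g1 σ ε ξ x0 x y s - x0‖ ≤ ε * (‖S‖ * ‖x0‖ + C) * (-s) := by
  have hdrift : ‖NormedSpace.exp ((ε * s) • S) x0 - x0‖ ≤ ε * (‖S‖ * ‖x0‖) * (-s) := by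
    simpa [mul_comm, mul_left_comm, mul_assoc] using
      norm_exp_smul_apply_sub_self_le hγs hS (mul_nonpos_of_nonneg_of_nonpos hε hs) x0
  have hforcing : ‖∫ u in (0:ℝ)..s,
      NormedSpace.exp ((ε * (s - u)) • S) (g1 (x u) (y u + σ • ξ u))‖ ≤ C * (-s) := by
    refine (intervalIntegral.norm_integral_le_of_norm_le_const fun u hu => ?_).trans_eq
      (by rw [sub_zero, abs_of_nonpos hs])
    rw [uIoc_comm, uIoc_of_le hs] at hu
    exact (norm_exp_smul_apply_le_self hγs hS
      (mul_nonpos_of_nonneg_of_nonpos hε (by linarith [hu.1])) _).trans (hg1 _ _)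
  calc ‖RSslow S g1 σ ε ξ x0 x y s - x0‖
      ≤ ‖NormedSpace.exp ((ε * s) • S) x0 - x0‖ + ‖ε • ∫ u in (0:ℝ)..s,
          NormedSpace.exp ((ε * (s - u)) • S) (g1 (x u) (y u + σ • ξ u))‖ := by
        rw [RSslow, add_sub_right_comm]
        exact norm_add_le _ _
    _ ≤ ε * (‖S‖ * ‖x0‖) * (-s) + ε * (C * (-s)) := by
        rw [norm_smul, Real.norm_of_nonneg hε]
        gcongr
    _ = ε * (‖S‖ * ‖x0‖ + C) * (-s) := by ring

lemma norm_RSslow_sub_le_mul_exp [CompleteSpace E] (hγs : 0 ≤ γs)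
    (hS : ∀ t ≤ (0:ℝ), ∀ x : E, ‖NormedSpace.exp (t • S) x‖ ≤ exp (γs * t) * ‖x‖)
    {g1 : E → E₂ → E} {C : ℝ} (hg1 : ∀ x y, ‖g1 x y‖ ≤ C) {ε γ : ℝ} (hε : 0 ≤ ε) (hγ : 0 < γ)
    (σ : ℝ) (ξ : ℝ → E₂) (x0 : E) (x : ℝ → E) (y : ℝ → E₂) {s : ℝ} (hs : s ≤ 0) :
    ‖RSslow S g1 σ ε ξ x0 x y s - x0‖ ≤ ε * ((‖S‖ * ‖x0‖ + C) / γ) * exp (-γ * s) := by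
  have hC : 0 ≤ C := (norm_nonneg _).trans (hg1 x0 0)
  calc ‖RSslow S g1 σ ε ξ x0 x y s - x0‖ ≤ ε * (‖S‖ * ‖x0‖ + C) * (-s) :=
        norm_RSslow_sub_le hγs hS hg1 hε σ ξ x0 x y hs
    _ ≤ ε * (‖S‖ * ‖x0‖ + C) * (exp (-γ * s) / γ) := by
        gcongr
        exact neg_le_exp_neg_mul_div hγ s
    _ = ε * ((‖S‖ * ‖x0‖ + C) / γ) * exp (-γ * s) := by ring

end SlowFlow

section FastFibre

variable [CompleteSpace E₂] {X : Type*} [SeminormedAddCommGroup X] {F : E₂ →L[ℝ] E₂}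
  {g2 : X → E₂ → E₂} {γf γ K σ Mξ : ℝ} {ξ : ℝ → E₂} {t : ℝ}

lemma integrableOn_Iic_RSfast_integrand
    (hF : ∀ t ≥ (0:ℝ), ∀ y : E₂, ‖NormedSpace.exp (t • F) y‖ ≤ exp (γf * t) * ‖y‖)
    (hγf : γf < -γ) (hK : 0 ≤ K)
    (hg2l : ∀ x₁ y₁ x₂ y₂, ‖g2 x₁ y₁ - g2 x₂ y₂‖ ≤ K * (‖x₁ - x₂‖ + ‖y₁ - y₂‖))
    (hg20 : g2 0 0 = 0) (hξm : AEStronglyMeasurable ξ volume)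
    (hξ : ∀ s ≤ (0:ℝ), ‖ξ s‖ ≤ Mξ * exp (-γ * s)) {a : ℝ} {x : ℝ → X} {y : ℝ → E₂}
    (hx : ContinuousOn x (Iic 0)) (hxb : ∀ s ≤ (0:ℝ), ‖x s‖ ≤ a * exp (-γ * s))
    (hy : MemCneg (-γ) y) (ht : t ≤ 0) :
    IntegrableOn (fun s => NormedSpace.exp ((t - s) • F) (g2 (x s) (y s + σ • ξ s))) (Iic t) := by
  have hIic : Iic t ⊆ Iic (0 : ℝ) := Iic_subset_Iic.2 ht
  refine integrableOn_Iic_exp_smul_apply hF hγf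
    ((continuous_uncurry_of_norm_sub_le hK hg2l).comp_aestronglyMeasurable
      (((hx.mono hIic).aestronglyMeasurable measurableSet_Iic).prodMk
        (((hy.1.mono hIic).aestronglyMeasurable measurableSet_Iic).add
          (hξm.restrict.const_smul σ))))
    (c := K * (a + negNorm (-γ) y + ‖σ‖ * Mξ)) fun s hs => ?_
  have hs0 : s ≤ 0 := hs.trans ht
  calc ‖g2 (x s) (y s + σ • ξ s)‖ ≤ K * (‖x s‖ + (‖y s‖ + ‖σ‖ * ‖ξ s‖)) := by
        refine (norm_le_of_norm_sub_le hg20 hg2l _ _).trans ?_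
        gcongr
        exact (norm_add_le _ _).trans_eq (by rw [norm_smul])
    _ ≤ K * (a * exp (-γ * s) + (negNorm (-γ) y * exp (-γ * s) + ‖σ‖ * (Mξ * exp (-γ * s)))) := by
        gcongr
        exacts [hxb s hs0, hy.norm_le_negNorm_mul hs0, hξ s hs0]
    _ = K * (a + negNorm (-γ) y + ‖σ‖ * Mξ) * exp (-γ * s) := by ring

lemma norm_RSfast_sub_Crit_le
    (hF : ∀ t ≥ (0:ℝ), ∀ y : E₂, ‖NormedSpace.exp (t • F) y‖ ≤ exp (γf * t) * ‖y‖)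
    (hγ : 0 < γ) (hγf : γf < -γ) (hK : 0 ≤ K)
    (hg2l : ∀ x₁ y₁ x₂ y₂, ‖g2 x₁ y₁ - g2 x₂ y₂‖ ≤ K * (‖x₁ - x₂‖ + ‖y₁ - y₂‖))
    (hg20 : g2 0 0 = 0) (hξm : AEStronglyMeasurable ξ volume)
    (hξ : ∀ s ≤ (0:ℝ), ‖ξ s‖ ≤ Mξ * exp (-γ * s))
    {x0 : X} {x : ℝ → X} {δ : ℝ} (hx : ContinuousOn x (Iic 0))
    (hxδ : ∀ s ≤ (0:ℝ), ‖x s - x0‖ ≤ δ * exp (-γ * s))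
    {y y0 : ℝ → E₂} (hy : MemCneg (-γ) y) (hy0 : MemCneg (-γ) y0) (ht : t ≤ 0) :
    ‖RSfast F g2 σ ξ x y t - Crit F g2 σ ξ x0 y0 t‖
      ≤ K * (δ + negNorm (-γ) (y - y0)) * exp (-γ * t) / (-γ - γf) := by
  have hexp_ge : ∀ s ≤ (0:ℝ), 1 ≤ exp (-γ * s) := fun s hs => one_le_exp (by nlinarith)
  have hxb : ∀ s ≤ (0:ℝ), ‖x s‖ ≤ (‖x0‖ + δ) * exp (-γ * s) := fun s hs => by
    nlinarith [hxδ s hs, norm_le_insert' (x s) x0, hexp_ge s hs, norm_nonneg x0]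
  have hx0b : ∀ s ≤ (0:ℝ), ‖x0‖ ≤ ‖x0‖ * exp (-γ * s) := fun s hs =>
    le_mul_of_one_le_right (norm_nonneg x0) (hexp_ge s hs)
  have hint := integrableOn_Iic_RSfast_integrand (σ := σ) hF hγf hK hg2l hg20 hξm hξ hx hxb hy ht
  have hint0 := integrableOn_Iic_RSfast_integrand (σ := σ) hF hγf hK hg2l hg20 hξm hξ
    continuousOn_const hx0b hy0 ht
  have hdiffb : ∀ s ≤ t, ‖g2 (x s) (y s + σ • ξ s) - g2 x0 (y0 s + σ • ξ s)‖
      ≤ K * (δ + negNorm (-γ) (y - y0)) * exp (-γ * s) := fun s hs =>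
    calc _ ≤ K * (‖x s - x0‖ + ‖(y - y0) s‖) := by
          simpa only [add_sub_add_right_eq_sub, Pi.sub_apply] using
            hg2l (x s) (y s + σ • ξ s) x0 (y0 s + σ • ξ s)
      _ ≤ K * (δ * exp (-γ * s) + negNorm (-γ) (y - y0) * exp (-γ * s)) := by
          gcongr
          exacts [hxδ s (hs.trans ht), (hy.sub hy0).norm_le_negNorm_mul (hs.trans ht)]
      _ = K * (δ + negNorm (-γ) (y - y0)) * exp (-γ * s) := by ring
  rw [RSfast, Crit, ← integral_sub hint hint0]
  simp_rw [← map_sub]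
  exact norm_integral_Iic_exp_smul_apply_le hF hγf hdiffb

lemma norm_sub_le_of_RSfast_of_Crit
    (hF : ∀ t ≥ (0:ℝ), ∀ y : E₂, ‖NormedSpace.exp (t • F) y‖ ≤ exp (γf * t) * ‖y‖)
    (hγ : 0 < γ) (hK : 0 ≤ K) (hgap : K < -(γ + γf))
    (hg2l : ∀ x₁ y₁ x₂ y₂, ‖g2 x₁ y₁ - g2 x₂ y₂‖ ≤ K * (‖x₁ - x₂‖ + ‖y₁ - y₂‖))
    (hg20 : g2 0 0 = 0) (hξm : AEStronglyMeasurable ξ volume)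
    (hξ : ∀ s ≤ (0:ℝ), ‖ξ s‖ ≤ Mξ * exp (-γ * s))
    {x0 : X} {x : ℝ → X} {δ : ℝ} (hx : ContinuousOn x (Iic 0))
    (hxδ : ∀ s ≤ (0:ℝ), ‖x s - x0‖ ≤ δ * exp (-γ * s))
    {y y0 : ℝ → E₂} (hy : MemCneg (-γ) y) (hy0 : MemCneg (-γ) y0)
    (hyfix : ∀ t ≤ (0:ℝ), y t = RSfast F g2 σ ξ x y t)
    (hy0fix : ∀ t ≤ (0:ℝ), y0 t = Crit F g2 σ ξ x0 y0 t) :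
    ‖y 0 - y0 0‖ ≤ K * δ / (-(γ + γf) - K) := by
  have hb : 0 < -γ - γf := by linarith
  set D := negNorm (-γ) (y - y0)
  have hcontract : D ≤ K * (δ + D) / (-γ - γf) := negNorm_le fun t ht =>
    calc exp (-(-γ) * t) * ‖(y - y0) t‖
        = exp (γ * t) * ‖RSfast F g2 σ ξ x y t - Crit F g2 σ ξ x0 y0 t‖ := by
          rw [neg_neg, Pi.sub_apply, ← hyfix t ht, ← hy0fix t ht]
      _ ≤ exp (γ * t) * (K * (δ + D) * exp (-γ * t) / (-γ - γf)) := by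
          gcongr
          exact norm_RSfast_sub_Crit_le hF hγ (by linarith) hK hg2l hg20 hξm hξ hx hxδ hy hy0 ht
      _ = K * (δ + D) * exp (γ * t + -γ * t) / (-γ - γf) := by rw [exp_add]; ring
      _ = K * (δ + D) / (-γ - γf) := by rw [← add_mul, add_neg_cancel, zero_mul, exp_zero, mul_one]
  have h0 : ‖y 0 - y0 0‖ ≤ D := (hy.sub hy0).norm_le_negNorm
  rw [le_div_iff₀ (by linarith)]
  rw [le_div_iff₀ hb] at hcontract
  nlinarith [mul_le_mul_of_nonneg_right h0 (by linarith : 0 ≤ -(γ + γf) - K)]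

end FastFibre

lemma eventually_rho_lt_one {γs γf γ K : ℝ} (hγ : 0 < γ) (hK : 0 ≤ K) (hgap : K < -(γ + γf)) :
    ∀ᶠ ε in 𝓝[>] 0, ε * K / (γ + ε * γs) - K / (γ + γf) < 1 := by
  have hρ : ContinuousAt (fun ε : ℝ => ε * K / (γ + ε * γs) - K / (γ + γf)) 0 :=
    ((continuousAt_id.mul continuousAt_const).div
      (continuousAt_const.add (continuousAt_id.mul continuousAt_const)) (by simpa using hγ.ne')).sub
      continuousAt_const
  have hρ0 : 0 * K / (γ + 0 * γs) - K / (γ + γf) < 1 := by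
    rw [zero_mul, zero_div, zero_sub, ← neg_div, div_lt_one_of_neg (by linarith)]
    linarith
  exact (hρ.tendsto.mono_left nhdsWithin_le_nhds).eventually_lt_const hρ0

theorem slowManifold_tendsto_criticalManifold_general
    {E₁ E₂ : Type*}
    [NormedAddCommGroup E₁] [NormedSpace ℝ E₁] [FiniteDimensional ℝ E₁]
    [NormedAddCommGroup E₂] [NormedSpace ℝ E₂] [FiniteDimensional ℝ E₂] [MeasurableSpace E₂] [BorelSpace E₂]
    (S : E₁ →L[ℝ] E₁) (F : E₂ →L[ℝ] E₂)
    (γs γf γ K σ : ℝ)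
    (hγs : 0 < γs) (hγ : 0 < γ) (hK : 0 < K)
    (hgap : K < -(γ + γf))
    (hS : ∀ t ≤ (0:ℝ), ∀ x : E₁, ‖NormedSpace.exp (t • S) x‖ ≤ Real.exp (γs * t) * ‖x‖)
    (hF : ∀ t ≥ (0:ℝ), ∀ y : E₂, ‖NormedSpace.exp (t • F) y‖ ≤ Real.exp (γf * t) * ‖y‖)
    (g1 : E₁ → E₂ → E₁) (g2 : E₁ → E₂ → E₂)
    (hg2l : ∀ x₁ y₁ x₂ y₂, ‖g2 x₁ y₁ - g2 x₂ y₂‖ ≤ K * (‖x₁ - x₂‖ + ‖y₁ - y₂‖))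
    (hg20 : g2 0 0 = 0)
    (ξ : ℝ → E₂) (hξm : Measurable ξ)
    (hξ : ∃ M, ∀ t ≤ (0:ℝ), Real.exp (γ * t) * ‖ξ t‖ ≤ M)
    (C : ℝ) (hg1bd : ∀ x y, ‖g1 x y‖ ≤ C)
    (x0 : E₁) (htil : ℝ → E₂)
    (hhe : ∀ ε : ℝ, 0 < ε → (ε * K / (γ + ε * γs) - K / (γ + γf)) < 1 →
      ∃ (xt : ℝ → E₁) (yt : ℝ → E₂),
        (MemCneg (-γ) xt ∧ MemCneg (-γ) yt) ∧
        (∀ t ≤ (0:ℝ), xt t = RSslow S g1 σ ε ξ x0 xt yt t ∧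
          yt t = RSfast F g2 σ ξ xt yt t) ∧
        htil ε = yt 0)
    (y0fn : ℝ → E₂)
    (hmem0 : MemCneg (-γ) y0fn)
    (hsol0 : ∀ t ≤ (0:ℝ), y0fn t = Crit F g2 σ ξ x0 y0fn t) :
    Tendsto htil (nhdsWithin 0 (Set.Ioi 0)) (nhds (y0fn 0)) := by
  obtain ⟨Mξ, hMξ⟩ := hξ
  have hξb : ∀ t ≤ (0:ℝ), ‖ξ t‖ ≤ Mξ * exp (-γ * t) := fun t ht => by
    simpa [neg_mul] using le_mul_exp_neg_of_exp_mul_le (hMξ t ht)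
  set B := K * ((‖S‖ * ‖x0‖ + C) / γ) / (-(γ + γf) - K)
  have hclose : ∀ᶠ ε in 𝓝[>] 0, ‖htil ε - y0fn 0‖ ≤ B * ε := by
    filter_upwards [eventually_rho_lt_one hγ hK.le hgap, self_mem_nhdsWithin] with ε hρ (hε : 0 < ε)
    obtain ⟨xt, yt, ⟨hxt, hyt⟩, hfix, hhtil⟩ := hhe ε hε hρ
    rw [hhtil]
    have hxδ : ∀ s ≤ (0:ℝ), ‖xt s - x0‖ ≤ ε * ((‖S‖ * ‖x0‖ + C) / γ) * exp (-γ * s) :=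
      fun s hs => (hfix s hs).1 ▸
        norm_RSslow_sub_le_mul_exp hγs.le hS hg1bd hε.le hγ σ ξ x0 xt yt hs
    calc ‖yt 0 - y0fn 0‖ ≤ K * (ε * ((‖S‖ * ‖x0‖ + C) / γ)) / (-(γ + γf) - K) :=
          norm_sub_le_of_RSfast_of_Crit hF hγ hK.le hgap hg2l hg20 hξm.aestronglyMeasurable hξb
            hxt.1 hxδ hyt hmem0 (fun t ht => (hfix t ht).2) hsol0
      _ = B * ε := by ring
  have hB : Tendsto (fun ε : ℝ => B * ε) (𝓝[>] 0) (𝓝 0) :=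
    tendsto_nhdsWithin_of_tendsto_nhds (by simpa using (continuous_const_mul B).tendsto 0)
  exact tendsto_sub_nhds_zero_iff.1 (squeeze_zero_norm' hclose hB)

/-- Pathwise convergence of the slow manifold to the critical manifold:
`h̃^ε(x₀) → h⁰(x₀)` as `ε → 0⁺`. -/
theorem slowManifold_tendsto_criticalManifold
    {E₁ E₂ : Type*}
    [NormedAddCommGroup E₁] [NormedSpace ℝ E₁] [FiniteDimensional ℝ E₁] [MeasurableSpace E₁] [BorelSpace E₁]
    [NormedAddCommGroup E₂] [NormedSpace ℝ E₂] [FiniteDimensional ℝ E₂] [MeasurableSpace E₂] [BorelSpace E₂]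
    (S : E₁ →L[ℝ] E₁) (F : E₂ →L[ℝ] E₂)
    (γs γf γ K σ : ℝ)
    (hγs : 0 < γs) (hγf : γf < 0) (hγ : 0 < γ) (hK : 0 < K)
    (hgap : K < -(γ + γf)) (hσ : 0 ≤ σ)
    (hS : ∀ t ≤ (0:ℝ), ∀ x : E₁, ‖NormedSpace.exp (t • S) x‖ ≤ Real.exp (γs * t) * ‖x‖)
    (hF : ∀ t ≥ (0:ℝ), ∀ y : E₂, ‖NormedSpace.exp (t • F) y‖ ≤ Real.exp (γf * t) * ‖y‖)
    (g1 : E₁ → E₂ → E₁) (g2 : E₁ → E₂ → E₂)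
    (hg1l : ∀ x₁ y₁ x₂ y₂, ‖g1 x₁ y₁ - g1 x₂ y₂‖ ≤ K * (‖x₁ - x₂‖ + ‖y₁ - y₂‖))
    (hg2l : ∀ x₁ y₁ x₂ y₂, ‖g2 x₁ y₁ - g2 x₂ y₂‖ ≤ K * (‖x₁ - x₂‖ + ‖y₁ - y₂‖))
    (hg10 : g1 0 0 = 0) (hg20 : g2 0 0 = 0)
    (ξ : ℝ → E₂) (hξm : Measurable ξ)
    (hξb : ∀ r : ℝ, ∃ M, ∀ t : ℝ, |t| ≤ r → ‖ξ t‖ ≤ M)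
    (hξ : ∃ M, ∀ t ≤ (0:ℝ), Real.exp (γ * t) * ‖ξ t‖ ≤ M)
    (C : ℝ) (hC : 0 < C) (hg1bd : ∀ x y, ‖g1 x y‖ ≤ C)
    (x0 : E₁) (htil : ℝ → E₂)
    (hhe : ∀ ε : ℝ, 0 < ε → (ε * K / (γ + ε * γs) - K / (γ + γf)) < 1 →
      ∃ (xt : ℝ → E₁) (yt : ℝ → E₂),
        (MemCneg (-γ) xt ∧ MemCneg (-γ) yt) ∧
        (∀ t ≤ (0:ℝ), xt t = RSslow S g1 σ ε ξ x0 xt yt t ∧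
          yt t = RSfast F g2 σ ξ xt yt t) ∧
        htil ε = yt 0)
    (y0fn : ℝ → E₂)
    (hmem0 : MemCneg (-γ) y0fn)
    (hsol0 : ∀ t ≤ (0:ℝ), y0fn t = Crit F g2 σ ξ x0 y0fn t) :
    Tendsto htil (nhdsWithin 0 (Set.Ioi 0)) (nhds (y0fn 0)) :=
  slowManifold_tendsto_criticalManifold_general S F γs γf γ K σ hγs hγ hK hgap hS hF g1 g2 hg2l hg20
    ξ hξm hξ C hg1bd x0 htil hhe y0fn hmem0 hsol0
end
end
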